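/- Let A and B be square complex matrices over nonempty finite index types. Then the trace norm of their Kronecker product satisfies ‖A ⊗ₖ B‖₁ = ‖A‖₁ · ‖B‖₁. -/

import Mathlib

open Matrix BigOperators Kronecker
open scoped ComplexOrder

/-- The trace norm of a square complex matrix: the trace of the positive semidefinite
square root of `Aᴴ * A`. -/
noncomputable def traceNorm {α : Type*} [Fintype α] [DecidableEq α]
    (A : Matrix α α ℂ) : ℝ :=
  (((Matrix.posSemidef_conjTranspose_mul_self A).1.eigenvectorUnitary.1 *
      diagonal (((↑) : ℝ → ℂ) ∘ (√·) ∘ (Matrix.posSemidef_conjTranspose_mul_self A).1.eigenvalues) *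
      (star (Matrix.posSemidef_conjTranspose_mul_self A).1.eigenvectorUnitary : Matrix α α ℂ)).trace).re

/-!
Since `(A ⊗ₖ B)ᴴ (A ⊗ₖ B) = AᴴA ⊗ₖ BᴴB` and `√P ⊗ₖ √Q` is positive semidefinite with square
`P ⊗ₖ Q`, uniqueness of positive square roots gives `√((A ⊗ₖ B)ᴴ (A ⊗ₖ B)) = √(AᴴA) ⊗ₖ √(BᴴB)`;
the trace is multiplicative on Kronecker products.
-/

open scoped MatrixOrder

section Kronecker

variable {𝕜 α β : Type*} [RCLike 𝕜] [Fintype α] [Fintype β]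

lemma Matrix.conjTranspose_mul_self_kronecker (A : Matrix α α 𝕜) (B : Matrix β β 𝕜) :
    (A ⊗ₖ B)ᴴ * (A ⊗ₖ B) = (Aᴴ * A) ⊗ₖ (Bᴴ * B) := by
  rw [conjTranspose_kronecker, ← mul_kronecker_mul]

lemma Matrix.kronecker_nonneg {P : Matrix α α 𝕜} {Q : Matrix β β 𝕜} (hP : 0 ≤ P) (hQ : 0 ≤ Q) :
    0 ≤ P ⊗ₖ Q :=
  nonneg_iff_posSemidef.mpr <|
    (nonneg_iff_posSemidef.mp hP).kronecker (nonneg_iff_posSemidef.mp hQ)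

lemma CFC.sqrt_kronecker [DecidableEq α] [DecidableEq β] {P : Matrix α α 𝕜} {Q : Matrix β β 𝕜}
    (hP : 0 ≤ P) (hQ : 0 ≤ Q) :
    CFC.sqrt (P ⊗ₖ Q) = CFC.sqrt P ⊗ₖ CFC.sqrt Q := by
  rw [CFC.sqrt_eq_iff _ _ (kronecker_nonneg hP hQ)
      (kronecker_nonneg (CFC.sqrt_nonneg P) (CFC.sqrt_nonneg Q)),
    ← mul_kronecker_mul, CFC.sqrt_mul_sqrt_self P hP, CFC.sqrt_mul_sqrt_self Q hQ]

end Kronecker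

lemma traceNorm_eq_re_trace_sqrt {α : Type*} [Fintype α] [DecidableEq α] (A : Matrix α α ℂ) :
    traceNorm A = (CFC.sqrt (Aᴴ * A)).trace.re := by
  have hA := posSemidef_conjTranspose_mul_self A
  rw [traceNorm, CFC.sqrt_eq_cfc, cfc_nnreal_eq_real _ (Aᴴ * A) (nonneg_iff_posSemidef.mpr hA),
    hA.1.cfc_eq, IsHermitian.cfc, Unitary.conjStarAlgAut_apply]
  congr 4
  funext i
  congr 2
  funext k
  simp [Real.coe_sqrt, Real.coe_toNNReal', hA.eigenvalues_nonneg k]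

lemma ofReal_traceNorm {α : Type*} [Fintype α] [DecidableEq α] (A : Matrix α α ℂ) :
    (traceNorm A : ℂ) = (CFC.sqrt (Aᴴ * A)).trace := by
  have htrace : 0 ≤ (CFC.sqrt (Aᴴ * A)).trace :=
    (nonneg_iff_posSemidef.mp (CFC.sqrt_nonneg _)).trace_nonneg
  rw [traceNorm_eq_re_trace_sqrt]
  exact Complex.ext rfl (Complex.nonneg_iff.mp htrace).2

theorem stmt2_general {α β : Type*} [Fintype α] [Fintype β] [DecidableEq α] [DecidableEq β]
    (A : Matrix α α ℂ) (B : Matrix β β ℂ) :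
    traceNorm (A ⊗ₖ B) = traceNorm A * traceNorm B := by
  apply Complex.ofReal_injective
  rw [Complex.ofReal_mul, ofReal_traceNorm, ofReal_traceNorm, ofReal_traceNorm,
    conjTranspose_mul_self_kronecker, CFC.sqrt_kronecker, trace_kronecker]
  all_goals exact star_mul_self_nonneg _

theorem stmt2 {α β : Type*} [Fintype α] [Fintype β] [DecidableEq α] [DecidableEq β]
    [Nonempty α] [Nonempty β] (A : Matrix α α ℂ) (B : Matrix β β ℂ) :
    traceNorm (A ⊗ₖ B) = traceNorm A * traceNorm B :=
  stmt2_general A B
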